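/- Let Π be a real random variable with E[Π] = r' := Φ⁻¹(ε') + √(2Vε'/(ε'−ε)) (or more generally E[Π] ≥ r') and Var(Π) ≤ V, where 0 < ε < ε' < 1 and V > 0. Then E[Φ(Π)] > ε. -/

import Mathlib

open MeasureTheory ProbabilityTheory

/-- Standard Gaussian density. -/
noncomputable def gaussPDF (x : ℝ) : ℝ := Real.exp (-(x ^ 2) / 2) / Real.sqrt (2 * Real.pi)

/-- Standard Gaussian CDF. -/
noncomputable def gaussCDF (x : ℝ) : ℝ := ∫ t in Set.Iic x, gaussPDF t

/-!
Write `m = E[Π]` and `r = √(2Vε'/(ε'−ε))`, so that `m − q ≥ r > 0`. By Chebyshev,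
`P(Π ≤ q) ≤ V / r² = (ε' − ε) / (2ε')`, and since `Φ ≥ Φ(q) = ε'` on `{Π > q}` and `Φ ≥ 0`,
`E[Φ(Π)] ≥ ε' · P(Π > q) ≥ ε' − (ε' − ε) / 2 = (ε' + ε) / 2 > ε`.
-/

lemma gaussPDF_eq_gaussianPDFReal : gaussPDF = gaussianPDFReal 0 1 := by
  ext x
  simp [gaussPDF, gaussianPDFReal, div_eq_inv_mul]

lemma gaussCDF_eq_cdf_gaussianReal : gaussCDF = cdf (gaussianReal 0 1) := by
  ext x
  rw [cdf_eq_real, measureReal_def, gaussianReal_apply_eq_integral _ one_ne_zero,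
    ENNReal.toReal_ofReal (setIntegral_nonneg measurableSet_Iic
      fun t _ ↦ gaussianPDFReal_nonneg 0 1 t), gaussCDF, gaussPDF_eq_gaussianPDFReal]

lemma integrable_cdf (ν μ : Measure ℝ) [IsFiniteMeasure μ] : Integrable (cdf ν) μ :=
  (integrable_const (1 : ℝ)).mono' (cdf ν).mono.measurable.aestronglyMeasurable
    (Filter.Eventually.of_forall fun x ↦ by
      rw [Real.norm_eq_abs, abs_of_nonneg (cdf_nonneg ν x)]
      exact cdf_le_one ν x)

lemma measureReal_le_le_variance_div_sq {Ω : Type*} [MeasurableSpace Ω] {μ : Measure Ω}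
    [IsFiniteMeasure μ] {X : Ω → ℝ} (hX : MemLp X 2 μ) {q : ℝ} (hq : q < μ[X]) :
    μ.real {ω | X ω ≤ q} ≤ variance X μ / (μ[X] - q) ^ 2 := by
  have hsub : {ω | X ω ≤ q} ⊆ {ω | μ[X] - q ≤ |X ω - μ[X]|} := fun ω hω ↦ by
    rw [Set.mem_ofPred_eq, abs_sub_comm]
    exact (le_abs_self _).trans' (by linarith [hω.out])
  calc μ.real {ω | X ω ≤ q} ≤ μ.real {ω | μ[X] - q ≤ |X ω - μ[X]|} := measureReal_mono hsub
    _ ≤ variance X μ / (μ[X] - q) ^ 2 :=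
      ENNReal.toReal_le_of_le_ofReal (div_nonneg (variance_nonneg X μ) (sq_nonneg _))
        (meas_ge_le_variance_div_sq hX (sub_pos.2 hq))

lemma mul_measureReal_Ioi_le_integral {f : ℝ → ℝ} (hf : Monotone f) (hf0 : 0 ≤ f)
    {μ : Measure ℝ} [IsFiniteMeasure μ] (hfi : Integrable f μ) (q : ℝ) :
    f q * μ.real (Set.Ioi q) ≤ ∫ x, f x ∂μ := by
  have hind : (Set.Ioi q).indicator (fun _ ↦ f q) ≤ f := fun x ↦ by
    by_cases hx : x ∈ Set.Ioi q
    · rw [Set.indicator_of_mem hx]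
      exact hf (le_of_lt hx)
    · rw [Set.indicator_of_notMem hx]
      exact hf0 x
  calc f q * μ.real (Set.Ioi q) = ∫ x, (Set.Ioi q).indicator (fun _ ↦ f q) x ∂μ := by
        rw [integral_indicator_const _ measurableSet_Ioi, smul_eq_mul, mul_comm]
    _ ≤ ∫ x, f x ∂μ := integral_mono ((integrable_const _).indicator measurableSet_Ioi) hfi hind

theorem stmt6_general {ε ε' V : ℝ} (hε : 0 < ε) (hεε' : ε < ε') (hV : 0 < V)
    {q : ℝ} (hq : gaussCDF q = ε')
    (μ : Measure ℝ) [IsProbabilityMeasure μ] (hL2 : MemLp id 2 μ)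
    (hmean : q + Real.sqrt (2 * V * ε' / (ε' - ε)) ≤ ∫ x, x ∂μ)
    (hvar : variance id μ ≤ V) :
    ε < ∫ x, gaussCDF x ∂μ := by
  set r := Real.sqrt (2 * V * ε' / (ε' - ε))
  have hε' : 0 < ε' := hε.trans hεε'
  have hgap : 0 < ε' - ε := sub_pos.2 hεε'
  have hr2 : r ^ 2 = 2 * V * ε' / (ε' - ε) := Real.sq_sqrt (by positivity)
  have hr : 0 < r := Real.sqrt_pos.2 (by positivity)
  have hqm : q < μ[id] := by simp only [id]; linarith
  have hlower : μ.real {x | x ≤ q} ≤ V / r ^ 2 := by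
    refine (measureReal_le_le_variance_div_sq hL2 hqm).trans ?_
    gcongr
    simp only [id]; linarith
  have hupper : 1 - V / r ^ 2 ≤ μ.real (Set.Ioi q) := by
    rw [← Set.compl_Iic, probReal_compl_eq_one_sub measurableSet_Iic]
    exact sub_le_sub_left hlower 1
  calc ε < (ε' + ε) / 2 := by linarith
    _ = ε' * (1 - V / r ^ 2) := by rw [hr2]; field_simp; ring
    _ ≤ ε' * μ.real (Set.Ioi q) := by gcongr
    _ ≤ ∫ x, gaussCDF x ∂μ := by
      rw [← hq, gaussCDF_eq_cdf_gaussianReal]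
      exact mul_measureReal_Ioi_le_integral (cdf _).mono (cdf_nonneg _) (integrable_cdf _ μ) q

/-- If `Π` has mean at least `Φ⁻¹(ε') + √(2Vε'/(ε'−ε))` and variance at most `V`,
where `0 < ε < ε' < 1` and `V > 0`, then `E[Φ(Π)] > ε`.  Here `q` plays the role of
`Φ⁻¹(ε')`, i.e. `Φ(q) = ε'`. -/
theorem stmt6 {ε ε' V : ℝ} (hε : 0 < ε) (hεε' : ε < ε') (hε' : ε' < 1) (hV : 0 < V)
    {q : ℝ} (hq : gaussCDF q = ε')
    (μ : Measure ℝ) [IsProbabilityMeasure μ] (hL2 : MemLp id 2 μ)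
    (hmean : q + Real.sqrt (2 * V * ε' / (ε' - ε)) ≤ ∫ x, x ∂μ)
    (hvar : variance id μ ≤ V) :
    ε < ∫ x, gaussCDF x ∂μ :=
  stmt6_general hε hεε' hV hq μ hL2 hmean hvar
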